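/- There do not exist integers q, w, n, α, β with q odd, w not divisible by 4, 0 ≤ α, β ≤ 3, satisfying: 4·n + w²·q = ±4; gcd(α,β) = 1 if α,β are both nonzero, gcd(4,α) = 1 if β = 0, gcd(4,β) = 1 if α = 0; n·α + w·β ≡ 0 (mod 4); and q·w·α ≡ 0 (mod 4). -/
import Mathlib

theorem stmt_6 :
    ¬ ∃ q w n α β : ℤ, Odd q ∧ ¬ (4 : ℤ) ∣ w ∧
      0 ≤ α ∧ α ≤ 3 ∧ 0 ≤ β ∧ β ≤ 3 ∧
      (4 * n + w ^ 2 * q = 4 ∨ 4 * n + w ^ 2 * q = -4) ∧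
      (α ≠ 0 → β ≠ 0 → Int.gcd α β = 1) ∧
      (β = 0 → Int.gcd 4 α = 1) ∧
      (α = 0 → Int.gcd 4 β = 1) ∧
      (4 : ℤ) ∣ n * α + w * β ∧
      (4 : ℤ) ∣ q * w * α := by
  rintro ⟨q, w, n, α, β, hq, hw, hα0, hα3, hβ0, hβ3, hdet, hgcd, hb0, ha0, hdiv1, hdiv2⟩
  -- first, w is even
  have hwe : (2 : ℤ) ∣ w := by
    by_contra hwo
    have hwodd : Odd w := by
      rcases Int.even_or_odd w with he | ho
      · exact absurd he.two_dvd hwo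
      · exact ho
    have h1 : Odd (w ^ 2 * q) := (hwodd.pow).mul hq
    obtain ⟨t, ht⟩ := h1
    omega
  obtain ⟨w', rfl⟩ := hwe
  have hw'odd : Odd w' := by
    rcases Int.even_or_odd w' with he | ho
    · obtain ⟨t, rfl⟩ := he; exfalso; exact hw ⟨t, by ring⟩
    · exact ho
  -- p = w'^2 * q is odd
  have hp : Odd (w' ^ 2 * q) := (hw'odd.pow).mul hq
  obtain ⟨c, hc⟩ := hp
  -- u = q * w' is odd
  have hu : Odd (q * w') := hq.mul hw'odd
  obtain ⟨b, hb⟩ := hu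
  obtain ⟨a, ha⟩ := hw'odd
  have hdet' : 4 * n + 4 * (w' ^ 2 * q) = 4 ∨ 4 * n + 4 * (w' ^ 2 * q) = -4 := by
    rcases hdet with h | h
    · left; linarith [h, (by ring : (2 * w') ^ 2 * q = 4 * (w' ^ 2 * q))]
    · right; linarith [h, (by ring : (2 * w') ^ 2 * q = 4 * (w' ^ 2 * q))]
  have hdiv2' : (4 : ℤ) ∣ 2 * (q * w') * α := by
    have : q * (2 * w') * α = 2 * (q * w') * α := by ring
    rwa [this] at hdiv2
  have hdiv1' : (4 : ℤ) ∣ n * α + 2 * w' * β := hdiv1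
  interval_cases α <;> interval_cases β <;>
    simp_all [Int.gcd] <;> omega
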